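/- Let n ≥ 1, let a ∈ ℂ^n with a·a = 1, let B_{n,2} = 2(n+2)/(3(n+1)), and set f = (1/B_{n,2})·q_n^2 − (a·x)^4. Then the kernel of the middle catalecticant map Cat_{f,2} is the one-dimensional space spanned by (n+2)·(a·Y)^2 − q_n(Y), where a·Y = a_1Y_1+⋯+a_nY_n and q_n(Y) = Y_1^2+⋯+Y_n^2. -/

import Mathlib

open MvPolynomial

noncomputable def qpoly (n : ℕ) : MvPolynomial (Fin n) ℂ :=
  ∑ i : Fin n, X i ^ 2

noncomputable def linForm {n : ℕ} (a : Fin n → ℂ) : MvPolynomial (Fin n) ℂ :=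
  ∑ i : Fin n, C (a i) * X i

noncomputable def dotC {n : ℕ} (a b : Fin n → ℂ) : ℂ :=
  ∑ i : Fin n, a i * b i

noncomputable def diffOp {n : ℕ} (φ f : MvPolynomial (Fin n) ℂ) : MvPolynomial (Fin n) ℂ :=
  ∑ d ∈ φ.support, φ.coeff d •
    ((List.ofFn fun i : Fin n =>
        ((pderiv i).toLinearMap : MvPolynomial (Fin n) ℂ →ₗ[ℂ] MvPolynomial (Fin n) ℂ) ^ d i).prod f)

noncomputable def lap {n : ℕ} (f : MvPolynomial (Fin n) ℂ) : MvPolynomial (Fin n) ℂ :=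
  ∑ i : Fin n, pderiv i (pderiv i f)

/-!
A quadric `φ` acts on polynomials by `φ(∂)`, linearly in `φ`, and `X i * X j` acts as `∂ᵢ∂ⱼ`.
Computing on these generators gives, for every quadric `φ`,
`φ(∂) q² = 2 Δφ · q + 8 φ` and `φ(∂) (a·x)⁴ = 12 φ(a) (a·x)²`, with `Δφ` a constant.
So `φ(∂) (β q² − (a·x)⁴) = 0` writes `8β φ` as a combination of `(a·x)²` and `q`, and applying `Δ`
to this relation (using `Δ (a·x)² = 2`, `Δ q = 2n`) forces `φ` to be a multiple of
`φ₀ = (n+2)(a·x)² − q`, for any `β ≠ 0`. Conversely `Δφ₀ = 4` and `φ₀(a) = n + 1`, so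
`φ₀(∂) (β q² − (a·x)⁴) = (8β(n+2) − 12(n+1)) (a·x)²`, which vanishes for `β = 1/B_{n,2}`.
-/

open scoped IsMulCommutative in
theorem List.prod_ofFn_pow_add {M : Type*} [Monoid M] {m : ℕ} {T : Fin m → M}
    (hT : ∀ k l, Commute (T k) (T l)) (d e : Fin m → ℕ) :
    (List.ofFn fun k => T k ^ (d k + e k)).prod =
      (List.ofFn fun k => T k ^ d k).prod * (List.ofFn fun k => T k ^ e k).prod := by
  -- compute in the commutative submonoid generated by the `T k`
  have := Submonoid.isMulCommutative_closure M (s := Set.range T) (by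
    rintro _ ⟨k, rfl⟩ _ ⟨l, rfl⟩; exact hT k l)
  let T' (k : Fin m) : Submonoid.closure (Set.range T) := ⟨T k, Submonoid.subset_closure ⟨k, rfl⟩⟩
  have h (d : Fin m → ℕ) : (List.ofFn fun k => T k ^ d k).prod = ↑(∏ k, T' k ^ d k) := by
    rw [← List.prod_ofFn, SubmonoidClass.coe_list_prod, List.map_ofFn]
    rfl
  rw [h, h, h]
  simp only [pow_add, Finset.prod_mul_distrib, Submonoid.coe_mul]

theorem List.prod_ofFn_pow_single {M : Type*} [Monoid M] {m : ℕ} (T : Fin m → M) (i : Fin m) :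
    (List.ofFn fun k => T k ^ (Pi.single i 1 : Fin m → ℕ) k).prod = T i := by
  induction m with
  | zero => exact i.elim0
  | succ m ih =>
    rw [List.ofFn_succ, List.prod_cons]
    cases i using Fin.cases with
    | zero => simp
    | succ i => simpa [Pi.single_apply] using ih (fun k => T k.succ) i

@[simp]
theorem MvPolynomial.pderiv_ofNat {σ R : Type*} [CommSemiring R] (i : σ) (k : ℕ) [k.AtLeastTwo] :
    pderiv i (ofNat(k) : MvPolynomial σ R) = 0 := by
  rw [← Nat.cast_ofNat]
  exact (pderiv i).map_natCast k

theorem MvPolynomial.pderiv_pderiv_comm {σ R : Type*} [CommSemiring R] (i j : σ)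
    (p : MvPolynomial σ R) :
    pderiv i (pderiv j p) = pderiv j (pderiv i p) := by
  classical
  induction p using MvPolynomial.induction_on with
  | C a => simp
  | add p q hp hq => simp only [map_add, hp, hq]
  | mul_X p k h =>
    simp only [pderiv_mul, pderiv_X, map_add, h, Pi.single_apply]
    split_ifs <;> simp [add_right_comm]

theorem Finsupp.exists_eq_single_add_single_of_degree_eq_two {σ : Type*} {d : σ →₀ ℕ}
    (hd : d.degree = 2) :
    ∃ i j, d = single i 1 + single j 1 := by
  classical
  have : Multiset.card (toMultiset d) = 2 := by
    rw [card_toMultiset, ← hd]; rfl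
  obtain ⟨i, j, hij⟩ := Multiset.card_eq_two.mp this
  refine ⟨i, j, ?_⟩
  rw [← toMultiset_toFinsupp d, hij]
  simp [Multiset.insert_eq_cons, ← Multiset.singleton_add, Multiset.toFinsupp_add]

theorem MvPolynomial.homogeneousSubmodule_two_eq_span {σ R : Type*} [CommSemiring R] :
    homogeneousSubmodule σ R 2 =
      Submodule.span R (Set.range fun ij : σ × σ => X ij.1 * X ij.2) := by
  apply le_antisymm
  · rw [homogeneousSubmodule_eq_finsupp_supported, AddMonoidAlgebra.supported_eq_span_single,
      Submodule.span_le]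
    rintro _ ⟨d, hd, rfl⟩
    obtain ⟨i, j, rfl⟩ := Finsupp.exists_eq_single_add_single_of_degree_eq_two hd
    exact Submodule.subset_span ⟨(i, j), by simp [X, monomial_mul, single_eq_monomial]⟩
  · rw [Submodule.span_le]
    rintro _ ⟨ij, rfl⟩
    exact (isHomogeneous_X R ij.1).mul (isHomogeneous_X R ij.2)

@[elab_as_elim]
theorem MvPolynomial.IsHomogeneous.induction_on_two {σ R : Type*} [CommSemiring R]
    {motive : MvPolynomial σ R → Prop} {φ : MvPolynomial σ R} (hφ : φ.IsHomogeneous 2)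
    (zero : motive 0) (X_mul_X : ∀ i j, motive (X i * X j))
    (add : ∀ p q, motive p → motive q → motive (p + q))
    (smul : ∀ (c : R) p, motive p → motive (c • p)) : motive φ := by
  rw [← mem_homogeneousSubmodule, homogeneousSubmodule_two_eq_span] at hφ
  induction hφ using Submodule.span_induction with
  | mem _ h => obtain ⟨⟨i, j⟩, rfl⟩ := h; exact X_mul_X i j
  | zero => exact zero
  | add p q _ _ hp hq => exact add p q hp hq
  | smul c p _ hp => exact smul c p hp

section

variable {n : ℕ}

noncomputable def pderivMonomial (d : Fin n →₀ ℕ) : Module.End ℂ (MvPolynomial (Fin n) ℂ) :=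
  (List.ofFn fun i => (pderiv i).toLinearMap ^ d i).prod

noncomputable def apolarity : MvPolynomial (Fin n) ℂ →ₗ[ℂ] Module.End ℂ (MvPolynomial (Fin n) ℂ) :=
  (basisMonomials (Fin n) ℂ).constr ℂ pderivMonomial

theorem diffOp_eq_apolarity (φ f : MvPolynomial (Fin n) ℂ) : diffOp φ f = apolarity φ f := by
  simp only [apolarity, Module.Basis.constr_apply, Finsupp.sum, LinearMap.sum_apply,
    LinearMap.smul_apply]
  rfl

theorem apolarity_monomial_one (d : Fin n →₀ ℕ) :
    apolarity (monomial d 1) = pderivMonomial d :=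
  (basisMonomials (Fin n) ℂ).constr_basis ℂ pderivMonomial d

theorem pderivMonomial_single_add_single (i j : Fin n) :
    pderivMonomial (Finsupp.single i 1 + Finsupp.single j 1) =
      (pderiv i).toLinearMap * (pderiv j).toLinearMap := by
  have hcomm (k l : Fin n) : Commute (pderiv (R := ℂ) k).toLinearMap (pderiv l).toLinearMap :=
    LinearMap.ext (pderiv_pderiv_comm k l)
  simp only [pderivMonomial, Finsupp.coe_add, Pi.add_apply, Finsupp.single_eq_pi_single,
    List.prod_ofFn_pow_add hcomm, List.prod_ofFn_pow_single]

theorem apolarity_X_mul_X (i j : Fin n) (f : MvPolynomial (Fin n) ℂ) :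
    apolarity (X i * X j) f = pderiv i (pderiv j f) := by
  rw [X, X, monomial_mul, one_mul, apolarity_monomial_one, pderivMonomial_single_add_single]
  rfl

theorem isHomogeneous_linForm (a : Fin n → ℂ) : (linForm a).IsHomogeneous 1 :=
  IsHomogeneous.sum _ _ _ fun _ _ => isHomogeneous_C_mul_X _ _

theorem isHomogeneous_qpoly : (qpoly n).IsHomogeneous 2 :=
  IsHomogeneous.sum _ _ _ fun i _ => isHomogeneous_X_pow i 2

theorem pderiv_qpoly (j : Fin n) : pderiv j (qpoly n) = 2 * X j := by
  simp [qpoly, pderiv_X, Pi.single_apply]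

theorem pderiv_linForm (a : Fin n → ℂ) (j : Fin n) : pderiv j (linForm a) = C (a j) := by
  simp [linForm, pderiv_X, Pi.single_apply]

theorem eval_linForm (a b : Fin n → ℂ) : eval b (linForm a) = dotC a b := by
  simp [linForm, dotC]

theorem eval_qpoly (a : Fin n → ℂ) : eval a (qpoly n) = dotC a a := by
  simp [qpoly, dotC, sq]

theorem lap_add (p q : MvPolynomial (Fin n) ℂ) : lap (p + q) = lap p + lap q := by
  simp [lap, Finset.sum_add_distrib]

theorem lap_sub (p q : MvPolynomial (Fin n) ℂ) : lap (p - q) = lap p - lap q := by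
  simp [lap, Finset.sum_sub_distrib]

theorem lap_C_mul (c : ℂ) (p : MvPolynomial (Fin n) ℂ) : lap (C c * p) = C c * lap p := by
  simp [lap, Finset.mul_sum]

theorem lap_X_mul_X (i j : Fin n) :
    lap (X i * X j : MvPolynomial (Fin n) ℂ) = if i = j then 2 else 0 := by
  simp [lap, pderiv_X, Pi.single_apply, apply_ite (pderiv _), Finset.sum_add_distrib, eq_comm]
  split_ifs <;> norm_num

theorem lap_qpoly : lap (qpoly n) = C (2 * (n : ℂ)) := by
  rw [map_mul, map_natCast, map_ofNat]
  simp [lap, pderiv_qpoly, mul_comm]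

theorem lap_linForm_sq (a : Fin n → ℂ) : lap (linForm a ^ 2) = C (2 * dotC a a) := by
  simp [lap, sq, pderiv_linForm, dotC, Finset.mul_sum, two_mul]

theorem lap_eq_C_of_isHomogeneous_two {φ : MvPolynomial (Fin n) ℂ} (hφ : φ.IsHomogeneous 2) :
    lap φ = C (coeff 0 (lap φ)) :=
  totalDegree_eq_zero_iff_eq_C.mp <| (totalDegree_zero_iff_isHomogeneous _).mpr <|
    IsHomogeneous.sum _ _ _ fun _ _ => hφ.pderiv.pderiv

theorem apolarity_qpoly_sq {φ : MvPolynomial (Fin n) ℂ} (hφ : φ.IsHomogeneous 2) :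
    apolarity φ (qpoly n ^ 2) = 2 * lap φ * qpoly n + 8 * φ := by
  refine hφ.induction_on_two ?_ (fun i j => ?_) (fun p q hp hq => ?_) (fun c p hp => ?_)
  · simp [lap]
  · rw [apolarity_X_mul_X, lap_X_mul_X]
    simp [pderiv_qpoly, pderiv_X, Pi.single_apply, eq_comm]
    split_ifs <;> ring
  · rw [map_add, LinearMap.add_apply, hp, hq, lap_add]; ring
  · rw [map_smul, LinearMap.smul_apply, hp, smul_eq_C_mul, smul_eq_C_mul, lap_C_mul]; ring

theorem apolarity_linForm_pow_four (a : Fin n → ℂ) {φ : MvPolynomial (Fin n) ℂ}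
    (hφ : φ.IsHomogeneous 2) :
    apolarity φ (linForm a ^ 4) = 12 * C (eval a φ) * linForm a ^ 2 := by
  refine hφ.induction_on_two ?_ (fun i j => ?_) (fun p q hp hq => ?_) (fun c p hp => ?_)
  · simp
  · rw [apolarity_X_mul_X]
    simp [pderiv_linForm]
    ring
  · rw [map_add, LinearMap.add_apply, hp, hq, map_add, map_add]; ring
  · rw [map_smul, LinearMap.smul_apply, hp, smul_eq_C_mul, smul_eq_C_mul, map_mul, eval_C,
      map_mul]
    ring

theorem apolarity_C_mul_qpoly_sq_sub_linForm_pow_four (a : Fin n → ℂ) (β : ℂ)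
    {φ : MvPolynomial (Fin n) ℂ} (hφ : φ.IsHomogeneous 2) :
    apolarity φ (C β * qpoly n ^ 2 - linForm a ^ 4) =
      C β * (2 * lap φ * qpoly n + 8 * φ) - 12 * C (eval a φ) * linForm a ^ 2 := by
  rw [map_sub, ← smul_eq_C_mul, map_smul, apolarity_qpoly_sq hφ,
    apolarity_linForm_pow_four a hφ, smul_eq_C_mul]

theorem exists_eq_smul_of_apolarity_eq_zero {a : Fin n → ℂ} (ha : dotC a a = 1) {β : ℂ}
    (hβ : β ≠ 0) {φ : MvPolynomial (Fin n) ℂ} (hφ : φ.IsHomogeneous 2)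
    (h : apolarity φ (C β * qpoly n ^ 2 - linForm a ^ 4) = 0) :
    ∃ c : ℂ, φ = c • (C ((n : ℂ) + 2) * linForm a ^ 2 - qpoly n) := by
  have hlap := lap_eq_C_of_isHomogeneous_two hφ
  set u := coeff 0 (lap φ)
  set s := eval a φ
  rw [apolarity_C_mul_qpoly_sq_sub_linForm_pow_four a β hφ, hlap] at h
  have hφ_eq : C (8 * β) * φ = C (12 * s) * linForm a ^ 2 - C (2 * β * u) * qpoly n := by
    simp only [map_mul, map_ofNat] at h ⊢
    linear_combination h
  have hsu : 12 * s = 2 * β * u * (n + 2) := by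
    have := congrArg lap hφ_eq
    rw [lap_C_mul, hlap, lap_sub, lap_C_mul, lap_C_mul, lap_linForm_sq, lap_qpoly, ha,
      ← map_mul, ← map_mul, ← map_mul, ← map_sub, C_inj] at this
    linear_combination -this / 2
  refine ⟨u / 4, mul_left_cancel₀ (C_ne_zero.mpr (mul_ne_zero (by norm_num : (8 : ℂ) ≠ 0) hβ)) ?_⟩
  rw [hφ_eq, smul_eq_C_mul, show 12 * s = 8 * β * (u / 4) * (n + 2) by rw [hsu]; ring,
    show 2 * β * u = 8 * β * (u / 4) by ring]
  simp only [map_mul]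
  ring

theorem isHomogeneous_C_mul_linForm_sq_sub_qpoly (a : Fin n → ℂ) (c : ℂ) :
    (C c * linForm a ^ 2 - qpoly n).IsHomogeneous 2 :=
  (((isHomogeneous_linForm a).pow 2).C_mul c).sub isHomogeneous_qpoly

theorem apolarity_C_mul_linForm_sq_sub_qpoly {a : Fin n → ℂ} (ha : dotC a a = 1) (β : ℂ) :
    apolarity (C ((n : ℂ) + 2) * linForm a ^ 2 - qpoly n) (C β * qpoly n ^ 2 - linForm a ^ 4) =
      C (8 * β * (n + 2) - 12 * (n + 1)) * linForm a ^ 2 := by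
  rw [apolarity_C_mul_qpoly_sq_sub_linForm_pow_four a β
      (isHomogeneous_C_mul_linForm_sq_sub_qpoly a _), lap_sub, lap_C_mul, lap_linForm_sq,
    lap_qpoly, ha]
  simp only [map_sub, map_mul, eval_C, map_pow, eval_linForm, eval_qpoly, ha]
  simp only [map_add, map_ofNat, map_natCast, map_one]
  ring

end

theorem kernel_middle_catalecticant_s2_general (n : ℕ)
    (a : Fin n → ℂ) (ha : dotC a a = 1) (f : MvPolynomial (Fin n) ℂ)
    (hf : f = C ((2 * ((n : ℂ) + 2) / (3 * ((n : ℂ) + 1)))⁻¹) * qpoly n ^ 2 - linForm a ^ 4) :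
    ∀ φ : MvPolynomial (Fin n) ℂ,
      (φ.IsHomogeneous 2 ∧ diffOp φ f = 0) ↔
        ∃ c : ℂ, φ = c • (C ((n : ℂ) + 2) * linForm a ^ 2 - qpoly n) := by
  have hn₁ : (n : ℂ) + 1 ≠ 0 := Nat.cast_add_one_ne_zero n
  have hn₂ : (n : ℂ) + 2 ≠ 0 := by exact_mod_cast (n + 1).succ_ne_zero
  set β := (2 * ((n : ℂ) + 2) / (3 * ((n : ℂ) + 1)))⁻¹ with hβ_def
  have hβ : β ≠ 0 := by simp [β, hn₁, hn₂]
  have hβ_val : 8 * β * (n + 2) - 12 * (n + 1) = 0 := by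
    rw [hβ_def]; field_simp; ring
  intro φ
  subst hf
  rw [diffOp_eq_apolarity]
  constructor
  · rintro ⟨hφ, h⟩
    exact exists_eq_smul_of_apolarity_eq_zero ha hβ hφ h
  · rintro ⟨c, rfl⟩
    refine ⟨?_, ?_⟩
    · rw [smul_eq_C_mul]
      exact (isHomogeneous_C_mul_linForm_sq_sub_qpoly a _).C_mul c
    · rw [map_smul, LinearMap.smul_apply, apolarity_C_mul_linForm_sq_sub_qpoly ha, hβ_val,
        map_zero, zero_mul, smul_zero]

/-- For a·a = 1 and f = (1/B_{n,2})·q_n^2 − (a·x)^4 with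
B_{n,2} = 2(n+2)/(3(n+1)), the kernel of Cat_{f,2} is spanned by (n+2)(a·Y)² − q_n(Y). -/
theorem kernel_middle_catalecticant_s2 (n : ℕ) (hn : 1 ≤ n)
    (a : Fin n → ℂ) (ha : dotC a a = 1) (f : MvPolynomial (Fin n) ℂ)
    (hf : f = C ((2 * ((n : ℂ) + 2) / (3 * ((n : ℂ) + 1)))⁻¹) * qpoly n ^ 2 - linForm a ^ 4) :
    ∀ φ : MvPolynomial (Fin n) ℂ,
      (φ.IsHomogeneous 2 ∧ diffOp φ f = 0) ↔
        ∃ c : ℂ, φ = c • (C ((n : ℂ) + 2) * linForm a ^ 2 - qpoly n) :=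
  kernel_middle_catalecticant_s2_general n a ha f hf
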